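/- arXiv:2008.06045 — 6 statements merged into one kernel-verified Lean document; each statement's English description precedes it below -/
import Mathlib

section
/- Let G be a bipartite graph with parts X and Y, and let δ(Y) denote the minimum degree among vertices of Y. For a vertex y ∈ Y, define the 0-excess of y as max(0, max_{x ∈ N(y)} deg(x) − deg(y)) (and 0 if y has no neighbours). Then the sum over all y ∈ Y of the 0-excess of y is at least δ(Y)·(|Y| − |X|). -/
/-!
Give each edge `yx` with `y ∈ Y` the weight `1 / deg x`. The weights at a vertex `x ∈ X` sum
to at most `1`, so the total weight is at most `|X|`. At `y ∈ Y` with `s` the largest degree of a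
neighbour, the weight is at least `deg y / s`, and `δ ≤ δ · deg y / s + 0-ex(y)`: either
`deg y ≥ s`, or `0-ex(y) = s - deg y` and `δ ≤ s`. Summing over `Y` gives
`δ |Y| ≤ δ |X| + ∑ 0-ex(y)`.
-/

/-- The 0-excess of a vertex `y`: `max (0, max_{x ∈ N(y)} deg x − deg y)`,
taken to be `0` when `y` has no neighbours (computed with truncated subtraction). -/
def zeroExcess {V : Type*} [Fintype V] (G : SimpleGraph V) [DecidableRel G.Adj] (y : V) : ℕ :=
  (G.neighborFinset y).sup (fun x => G.degree x) - G.degree y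

open Finset

theorem Nat.cast_le_mul_div_add_tsub {δ d s : ℕ} (hδd : δ ≤ d) (hs : 0 < s) :
    (δ : ℚ) ≤ δ * (d / s) + ((s - d : ℕ) : ℚ) := by
  have hsQ : (0 : ℚ) < s := by exact_mod_cast hs
  rcases le_total s d with hsd | hds
  · calc (δ : ℚ) ≤ δ * (d / s) :=
          le_mul_of_one_le_right δ.cast_nonneg ((one_le_div hsQ).2 (by exact_mod_cast hsd))
      _ ≤ _ := le_add_of_nonneg_right (Nat.cast_nonneg _)
  · have hδs : (δ : ℚ) ≤ s := by exact_mod_cast hδd.trans hds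
    have hdsQ : (d : ℚ) ≤ s := by exact_mod_cast hds
    rw [Nat.cast_sub hds, mul_div_assoc', div_add' _ _ _ hsQ.ne', le_div_iff₀ hsQ]
    nlinarith [mul_nonneg (sub_nonneg.2 hdsQ) (sub_nonneg.2 hδs)]

namespace SimpleGraph

variable {V : Type*} [Fintype V] (G : SimpleGraph V) [DecidableRel G.Adj]

theorem degree_div_le_sum_inv_degree (y : V) :
    (G.degree y : ℚ) / (G.neighborFinset y).sup (fun x => G.degree x) ≤
      ∑ x ∈ G.neighborFinset y, (1 / G.degree x : ℚ) := by
  rw [← card_neighborFinset_eq_degree, div_eq_mul_one_div, ← nsmul_eq_mul, ← sum_const]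
  refine sum_le_sum fun x hx =>
    one_div_le_one_div_of_le ?_ (by exact_mod_cast le_sup (f := fun x => G.degree x) hx)
  exact_mod_cast G.degree_pos_iff_exists_adj x |>.2 ⟨y, (G.mem_neighborFinset y x).1 hx |>.symm⟩

theorem le_mul_sum_inv_degree_add_zeroExcess {δ : ℕ} {y : V} (hδ : δ ≤ G.degree y) :
    (δ : ℚ) ≤ δ * ∑ x ∈ G.neighborFinset y, (1 / G.degree x : ℚ) + zeroExcess G y := by
  rcases (G.degree y).eq_zero_or_pos with h0 | hpos
  · simp [Nat.le_zero.1 (h0 ▸ hδ)]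
  obtain ⟨x, hx⟩ := (G.degree_pos_iff_exists_adj y).1 hpos
  have hs : 0 < (G.neighborFinset y).sup (fun x => G.degree x) :=
    lt_of_lt_of_le ((G.degree_pos_iff_exists_adj x).2 ⟨y, hx.symm⟩)
      (le_sup (f := fun x => G.degree x) ((G.mem_neighborFinset y x).2 hx))
  calc (δ : ℚ)
        ≤ δ * (G.degree y / (G.neighborFinset y).sup (fun x => G.degree x)) + zeroExcess G y :=
        Nat.cast_le_mul_div_add_tsub hδ hs
    _ ≤ _ := by gcongr; exact G.degree_div_le_sum_inv_degree y

theorem sum_sum_inv_degree_le_card {X Y : Finset V} (hN : ∀ y ∈ Y, G.neighborFinset y ⊆ X) :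
    ∑ y ∈ Y, ∑ x ∈ G.neighborFinset y, (1 / G.degree x : ℚ) ≤ #X := by
  have hmem (y x : V) :
      y ∈ Y ∧ x ∈ G.neighborFinset y ↔ y ∈ Y.filter (G.Adj x) ∧ x ∈ X := by
    simp only [mem_filter, mem_neighborFinset, G.adj_comm x]
    exact ⟨fun ⟨hy, hxy⟩ => ⟨⟨hy, hxy⟩, hN y hy ((G.mem_neighborFinset y x).2 hxy)⟩,
      fun ⟨h, _⟩ => h⟩
  rw [sum_comm' hmem]
  refine (sum_le_sum fun x _ => ?_).trans_eq (by simp : ∑ _x ∈ X, (1 : ℚ) = #X)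
  rw [sum_const, nsmul_eq_mul, mul_one_div]
  refine div_le_one_of_le₀ ?_ (Nat.cast_nonneg _)
  rw [← card_neighborFinset_eq_degree]
  exact_mod_cast card_le_card fun y hy => (G.mem_neighborFinset x y).2 (mem_filter.1 hy).2

theorem mul_card_le_mul_card_add_sum_zeroExcess {X Y : Finset V} {δ : ℕ}
    (hδ : ∀ y ∈ Y, δ ≤ G.degree y) (hN : ∀ y ∈ Y, G.neighborFinset y ⊆ X) :
    (δ : ℚ) * #Y ≤ δ * #X + ∑ y ∈ Y, (zeroExcess G y : ℚ) :=
  calc (δ : ℚ) * #Y = ∑ _y ∈ Y, (δ : ℚ) := by rw [sum_const, nsmul_eq_mul, mul_comm]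
    _ ≤ ∑ y ∈ Y, (δ * ∑ x ∈ G.neighborFinset y, (1 / G.degree x : ℚ) +
          zeroExcess G y) :=
      sum_le_sum fun y hy => G.le_mul_sum_inv_degree_add_zeroExcess (hδ y hy)
    _ = δ * ∑ y ∈ Y, ∑ x ∈ G.neighborFinset y, (1 / G.degree x : ℚ) +
          ∑ y ∈ Y, (zeroExcess G y : ℚ) := by rw [sum_add_distrib, mul_sum]
    _ ≤ δ * #X + ∑ y ∈ Y, (zeroExcess G y : ℚ) := by
      gcongr; exact G.sum_sum_inv_degree_le_card hN

end SimpleGraph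

theorem zeroExcess_sum_general {V : Type*} [Fintype V] [DecidableEq V] (G : SimpleGraph V) [DecidableRel G.Adj]
    (X Y : Finset V) (hdisj : Disjoint X Y)
    (hbip : ∀ u v, G.Adj u v → (u ∈ X ∧ v ∈ Y) ∨ (u ∈ Y ∧ v ∈ X))
    (hY : Y.Nonempty) :
    (Y.inf' hY (fun y => G.degree y) : ℤ) * ((Y.card : ℤ) - (X.card : ℤ)) ≤
      ∑ y ∈ Y, (zeroExcess G y : ℤ) := by
  have hN : ∀ y ∈ Y, G.neighborFinset y ⊆ X := fun y hy x hx => by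
    rcases hbip y x ((G.mem_neighborFinset y x).1 hx) with ⟨hyX, -⟩ | ⟨-, hxX⟩
    · exact absurd hy (disjoint_left.1 hdisj hyX)
    · exact hxX
  rw [← Nat.cast_finsetInf']
  set δ := Y.inf' hY fun y => G.degree y
  have key : (δ : ℚ) * #Y ≤ δ * #X + ∑ y ∈ Y, (zeroExcess G y : ℚ) :=
    G.mul_card_le_mul_card_add_sum_zeroExcess (fun y hy => inf'_le (fun y => G.degree y) hy) hN
  have keyZ : (δ : ℤ) * #Y ≤ δ * #X + ∑ y ∈ Y, (zeroExcess G y : ℤ) := by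
    exact_mod_cast key
  linarith

/-- **0-excess sum lemma.** For a bipartite graph with parts `X, Y` and `δ` the minimum
degree among vertices of `Y`, we have `∑_{y ∈ Y} 0-ex(y) ≥ δ(Y)·(|Y| − |X|)`. -/
theorem zeroExcess_sum {V : Type*} [Fintype V] [DecidableEq V] (G : SimpleGraph V) [DecidableRel G.Adj]
    (X Y : Finset V) (hdisj : Disjoint X Y) (hcover : X ∪ Y = Finset.univ)
    (hbip : ∀ u v, G.Adj u v → (u ∈ X ∧ v ∈ Y) ∨ (u ∈ Y ∧ v ∈ X))
    (hY : Y.Nonempty) :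
    (Y.inf' hY (fun y => G.degree y) : ℤ) * ((Y.card : ℤ) - (X.card : ℤ)) ≤
      ∑ y ∈ Y, (zeroExcess G y : ℤ) :=
  zeroExcess_sum_general G X Y hdisj hbip hY
end

section
/- Let G be a bipartite graph with parts X, Y and let Y' ⊆ Y with δ(Y') the minimum degree in G among vertices of Y'. For y ∈ Y, define the k-excess of y as max(0, d(x_k) − d(y)), where x_k is the k-th largest-degree neighbour of y (and 0 if y has fewer than k neighbours). Then ∑_{y ∈ Y'} k-excess(y) ≥ δ(Y')·(|Y'| − |X|) − 2k·|Y'|. -/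
/-!
Weight each `x ∈ X` by `w(x) = (d(x) − δ)₊ / d(x)` and count the pairs `(y, x)` with `y ∈ Y'`,
`x ∈ N(y)`, each with weight `w(x)`. Grouped by `x`, with `n(x) = |N(x) ∩ Y'| ≤ d(x)`, the total is
`∑ n(x) w(x) ≥ ∑ (n(x) − δ) = ∑_{y ∈ Y'} d(y) − δ|X|`. Grouped by `y`, fewer than `k` neighbours of
`y` have degree above `d(x_k)`, each of weight at most `1`, and the at most `d(y)` others have
degree at most `D = d(y) + ex(y)`, hence weight at most `(D − δ)/D`; so the weight at `y` is at most
`k − 1 + d(y) + ex(y) − δ`. Comparing the two counts gives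
`∑ ex(y) ≥ δ(|Y'| − |X|) − (k − 1)|Y'|`.
-/

/-- The `k`-th largest element of a multiset of naturals (`k ≥ 1`),
or `0` if the multiset has fewer than `k` elements. -/
def kthLargest (s : Multiset ℕ) (k : ℕ) : ℕ :=
  ((s.sort (· ≤ ·)).reverse.getD (k - 1) 0)

/-- The `k`-excess of a vertex `y`: `max (0, d(x_k) − d(y))` where `x_k` is the
`k`-th largest-degree neighbour of `y`, taken to be `0` if `y` has fewer than `k`
neighbours (computed with truncated subtraction). -/
def kExcess {V : Type*} [Fintype V] (G : SimpleGraph V) [DecidableRel G.Adj]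
    (k : ℕ) (y : V) : ℕ :=
  kthLargest ((G.neighborFinset y).val.map (fun x => G.degree x)) k - G.degree y

open Finset

theorem List.countP_getD_lt_le {l : List ℕ} (hl : l.Pairwise (· ≥ ·)) (i : ℕ) :
    l.countP (l.getD i 0 < ·) ≤ i := by
  have hdrop : (l.drop i).countP (l.getD i 0 < ·) = 0 := by
    rcases lt_or_ge i l.length with hi | hi
    · have hsorted := hl.sublist (List.drop_sublist i l)
      rw [List.drop_eq_getElem_cons hi] at hsorted ⊢
      rw [List.getD_eq_getElem _ _ hi, List.countP_eq_zero]
      intro a ha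
      rcases List.mem_cons.1 ha with rfl | ha
      · simp
      · simpa using (List.pairwise_cons.1 hsorted).1 a ha
    · simp [List.drop_eq_nil_of_le hi]
  calc l.countP (l.getD i 0 < ·)
      = (l.take i).countP (l.getD i 0 < ·) + (l.drop i).countP (l.getD i 0 < ·) := by
        rw [← List.countP_append, List.take_append_drop]
    _ ≤ i := by
        rw [hdrop, add_zero]
        exact List.countP_le_length.trans (List.length_take_le _ _)

theorem card_filter_kthLargest_lt (s : Multiset ℕ) (k : ℕ) :
    (s.filter (kthLargest s k < ·)).card ≤ k - 1 := by
  set l := (s.sort (· ≤ ·)).reverse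
  have hs : s = (l : Multiset ℕ) := by simp [l]
  have hl : l.Pairwise (· ≥ ·) := List.pairwise_reverse.2 (s.pairwise_sort _)
  rw [← Multiset.countP_eq_card_filter]
  show Multiset.countP (l.getD (k - 1) 0 < ·) s ≤ k - 1
  rw [hs]
  exact (Multiset.coe_countP _ _).trans_le (List.countP_getD_lt_le hl (k - 1))

theorem card_filter_kthLargest_map_lt {α : Type*} (t : Finset α) (f : α → ℕ) (k : ℕ) :
    #{x ∈ t | kthLargest (t.val.map f) k < f x} ≤ k - 1 := by
  have h := card_filter_kthLargest_lt (t.val.map f) k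
  rwa [Multiset.filter_map, Multiset.card_map] at h

def excessRatio (δ d : ℕ) : ℚ := ((d - δ : ℕ) : ℚ) / d

theorem excessRatio_nonneg (δ d : ℕ) : 0 ≤ excessRatio δ d := by
  unfold excessRatio; positivity

theorem excessRatio_le_one (δ d : ℕ) : excessRatio δ d ≤ 1 :=
  div_le_one_of_le₀ (by exact_mod_cast Nat.sub_le d δ) d.cast_nonneg

theorem excessRatio_mono (δ : ℕ) : Monotone (excessRatio δ) := by
  intro a b hab
  rcases Nat.eq_zero_or_pos a with rfl | ha
  · simpa [excessRatio] using excessRatio_nonneg δ b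
  rcases le_or_gt δ a with hδ | hδ
  · have ha' : (0 : ℚ) < a := by exact_mod_cast ha
    have hb : (0 : ℚ) < b := ha'.trans_le (by exact_mod_cast hab)
    rw [excessRatio, excessRatio, Nat.cast_sub hδ, Nat.cast_sub (hδ.trans hab), sub_div, sub_div,
      div_self ha'.ne', div_self hb.ne']
    gcongr
  · simpa [excessRatio, Nat.sub_eq_zero_of_le hδ.le] using excessRatio_nonneg δ b

theorem natCast_mul_excessRatio_self (δ d : ℕ) : (d : ℚ) * excessRatio δ d = (d - δ : ℕ) := by
  rcases Nat.eq_zero_or_pos d with rfl | hd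
  · simp
  · exact mul_div_cancel₀ _ (by positivity)

theorem sub_le_mul_excessRatio (δ : ℕ) {n d : ℕ} (hnd : n ≤ d) :
    (n : ℚ) - δ ≤ n * excessRatio δ d := by
  -- `n w = d w − (d − n) w ≥ (d − δ) − (d − n)`, as `w ≤ 1`.
  have hrest : ((d : ℚ) - n) * excessRatio δ d ≤ d - n :=
    mul_le_of_le_one_right (by simpa using hnd) (excessRatio_le_one δ d)
  have hsub : (d : ℚ) - δ ≤ (d - δ : ℕ) := by
    rcases le_total δ d with h | h
    · rw [Nat.cast_sub h]
    · rw [Nat.sub_eq_zero_of_le h, Nat.cast_zero, sub_nonpos]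
      exact_mod_cast h
  have hmul := natCast_mul_excessRatio_self δ d
  linarith

theorem sum_excessRatio_le {α : Type*} (t : Finset α) (f : α → ℕ) (δ k : ℕ) {D : ℕ}
    (hK : kthLargest (t.val.map f) k ≤ D) (ht : #t ≤ D) :
    ∑ x ∈ t, excessRatio δ (f x) ≤ (k - 1 : ℕ) + (D - δ : ℕ) := by
  classical
  set K := kthLargest (t.val.map f) k
  rw [← sum_filter_add_sum_filter_not t (K < f ·)]
  gcongr ?_ + ?_
  · calc ∑ x ∈ t with K < f x, excessRatio δ (f x)
        ≤ #{x ∈ t | K < f x} • (1 : ℚ) :=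
          sum_le_card_nsmul _ _ _ fun x _ => excessRatio_le_one δ (f x)
      _ ≤ (k - 1 : ℕ) := by
          simpa using card_filter_kthLargest_map_lt t f k
  · calc ∑ x ∈ t with ¬K < f x, excessRatio δ (f x)
        ≤ #{x ∈ t | ¬K < f x} • excessRatio δ D :=
          sum_le_card_nsmul _ _ _ fun x hx =>
            excessRatio_mono δ ((not_lt.1 (mem_filter.1 hx).2).trans hK)
      _ ≤ D * excessRatio δ D := by
          rw [nsmul_eq_mul]
          gcongr
          · exact excessRatio_nonneg δ D
          · exact_mod_cast (card_filter_le _ _).trans ht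
      _ = (D - δ : ℕ) := natCast_mul_excessRatio_self δ D

namespace SimpleGraph

variable {V : Type*} [Fintype V] (G : SimpleGraph V) [DecidableRel G.Adj]

theorem sum_sum_neighborFinset_eq {X Y : Finset V} (hN : ∀ y ∈ Y, G.neighborFinset y ⊆ X)
    {M : Type*} [AddCommMonoid M] (g : V → M) :
    ∑ y ∈ Y, ∑ x ∈ G.neighborFinset y, g x = ∑ x ∈ X, #{y ∈ Y | G.Adj y x} • g x := by
  have hAbove : ∀ y ∈ Y, X.bipartiteAbove G.Adj y = G.neighborFinset y := fun y hy => by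
    ext x
    simpa [bipartiteAbove] using fun h => hN y hy ((G.mem_neighborFinset y x).2 h)
  rw [← sum_congr rfl fun y hy => congrArg (∑ x ∈ ·, g x) (hAbove y hy),
    sum_sum_bipartiteAbove_eq_sum_sum_bipartiteBelow]
  simp [bipartiteBelow]

theorem le_sum_kExcess (k δ : ℕ) {X Y : Finset V} (hN : ∀ y ∈ Y, G.neighborFinset y ⊆ X)
    (hδ : ∀ y ∈ Y, δ ≤ G.degree y) :
    (δ : ℤ) * (#Y - #X) - (k - 1 : ℕ) * #Y ≤ ∑ y ∈ Y, (kExcess G k y : ℤ) := by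
  set n : V → ℕ := fun x => #{y ∈ Y | G.Adj y x}
  have hn : ∀ x, n x ≤ G.degree x := fun x => by
    rw [← card_neighborFinset_eq_degree]
    exact card_le_card fun y hy => (G.mem_neighborFinset x y).2 (mem_filter.1 hy).2.symm
  have hdeg : ∑ x ∈ X, (n x : ℚ) = ∑ y ∈ Y, (G.degree y : ℚ) := by
    simpa using (G.sum_sum_neighborFinset_eq hN (fun _ => (1 : ℚ))).symm
  have hX : ∑ x ∈ X, ((n x : ℚ) - δ) ≤ ∑ x ∈ X, n x * excessRatio δ (G.degree x) :=
    sum_le_sum fun x _ => sub_le_mul_excessRatio δ (hn x)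
  have hY : ∀ y ∈ Y, ∑ x ∈ G.neighborFinset y, excessRatio δ (G.degree x)
      ≤ (k - 1 : ℕ) + (G.degree y + kExcess G k y - δ : ℚ) := fun y hy => by
    have := sum_excessRatio_le (G.neighborFinset y) (fun x => G.degree x) δ k
      (D := G.degree y + kExcess G k y) (by unfold kExcess; omega) (by simp)
    rwa [Nat.cast_sub ((hδ y hy).trans (Nat.le_add_right _ _)), Nat.cast_add] at this
  have hsum := hX.trans ((G.sum_sum_neighborFinset_eq hN _).symm.trans_le (sum_le_sum hY))
  simp only [nsmul_eq_mul, sum_sub_distrib, sum_add_distrib, sum_const, hdeg] at hsum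
  exact_mod_cast (by linarith :
    (δ : ℚ) * (#Y - #X) - (k - 1 : ℕ) * #Y ≤ ∑ y ∈ Y, (kExcess G k y : ℚ))

end SimpleGraph

theorem kExcess_sum_general {V : Type*} [Fintype V]
    (G : SimpleGraph V) [DecidableRel G.Adj] (k : ℕ)
    (X Y : Finset V) (hdisj : Disjoint X Y)
    (hbip : ∀ u v, G.Adj u v → (u ∈ X ∧ v ∈ Y) ∨ (u ∈ Y ∧ v ∈ X))
    (Y' : Finset V) (hY' : Y' ⊆ Y) (hne : Y'.Nonempty) :
    (Y'.inf' hne (fun y => G.degree y) : ℤ) * ((Y'.card : ℤ) - (X.card : ℤ))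
        - 2 * (k : ℤ) * (Y'.card : ℤ) ≤
      ∑ y ∈ Y', (kExcess G k y : ℤ) := by
  have hN : ∀ y ∈ Y', G.neighborFinset y ⊆ X := fun y hy x hx => by
    rcases hbip y x ((G.mem_neighborFinset y x).1 hx) with ⟨hyX, -⟩ | ⟨-, hxX⟩
    · exact absurd (hY' hy) (disjoint_left.1 hdisj hyX)
    · exact hxX
  obtain ⟨y₀, -, hy₀⟩ := exists_mem_eq_inf' hne fun y => (G.degree y : ℤ)
  have hδ : ∀ y ∈ Y', G.degree y₀ ≤ G.degree y := fun y hy => by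
    exact_mod_cast hy₀ ▸ inf'_le (fun y => (G.degree y : ℤ)) hy
  have h := G.le_sum_kExcess k (G.degree y₀) hN hδ
  have hk : ((k - 1 : ℕ) : ℤ) * #Y' ≤ 2 * k * #Y' := by
    gcongr
    omega
  rw [hy₀]
  linarith

/-- **k-excess sum lemma.** For a bipartite graph with parts `X, Y`, a subset `Y' ⊆ Y`
and `δ(Y')` the minimum degree among vertices of `Y'`:
`∑_{y ∈ Y'} k-ex(y) ≥ δ(Y')·(|Y'| − |X|) − 2k·|Y'|`. -/
theorem kExcess_sum {V : Type*} [Fintype V] [DecidableEq V]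
    (G : SimpleGraph V) [DecidableRel G.Adj] (k : ℕ) (hk : 0 < k)
    (X Y : Finset V) (hdisj : Disjoint X Y) (hcover : X ∪ Y = Finset.univ)
    (hbip : ∀ u v, G.Adj u v → (u ∈ X ∧ v ∈ Y) ∨ (u ∈ Y ∧ v ∈ X))
    (Y' : Finset V) (hY' : Y' ⊆ Y) (hne : Y'.Nonempty) :
    (Y'.inf' hne (fun y => G.degree y) : ℤ) * ((Y'.card : ℤ) - (X.card : ℤ))
        - 2 * (k : ℤ) * (Y'.card : ℤ) ≤
      ∑ y ∈ Y', (kExcess G k y : ℤ) :=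
  kExcess_sum_general G k X Y hdisj hbip Y' hY' hne
end

section
/- Let M be a coloured matroid, I a rainbow independent set, and e an element not in I such that I ∪ {e} is rainbow and independent. Let R be a rainbow independent set with I ⊆ R. Then there exist at most two elements f₁, f₂ ∈ R \ I such that (R \ {f₁, f₂}) ∪ {e} is a rainbow independent set. -/
open Set

/-- A colouring of a matroid in which every colour class is independent. -/
def IsColouring {α β : Type*} (M : Matroid α) (κ : α → β) : Prop :=
  ∀ b : β, M.Indep {x ∈ M.E | κ x = b}

/-- A rainbow independent set: independent, with pairwise distinct colours. -/
def RainbowIndep {α β : Type*} (M : Matroid α) (κ : α → β) (I : Set α) : Prop :=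
  M.Indep I ∧ Set.InjOn κ I

/-!
First discard the (at most one) element of `R` sharing the colour of `e`; what remains is
independent and avoids the colour of `e`. If adding `e` to it destroys independence, the
fundamental circuit of `e` is not contained in the independent set `insert e I`, so it has an
element `f ∈ R \ I`, and deleting `f` breaks that unique circuit.
-/

namespace Matroid

variable {α : Type*} {M : Matroid α} {e : α} {I R : Set α}

lemma Indep.exists_subsingleton_insert_sdiff_indep (hR : M.Indep R) (hI : M.Indep (insert e I)) :
    ∃ F ⊆ R \ I, F.Subsingleton ∧ M.Indep (insert e (R \ F)) := by
  by_cases hins : M.Indep (insert e R)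
  · exact ⟨∅, empty_subset _, subsingleton_empty, by rwa [sdiff_empty]⟩
  have heR : e ∉ R := fun h ↦ hins (by rwa [insert_eq_of_mem h])
  have hecl : e ∈ M.closure R := by
    by_contra h
    exact hins ((hR.insert_indep_iff_of_notMem heR).2 ⟨hI.subset_ground (mem_insert _ _), h⟩)
  have hC := hR.fundCircuit_isCircuit hecl heR
  obtain ⟨f, hfC, hfI⟩ := not_subset.1 fun h : M.fundCircuit e R ⊆ insert e I ↦
    hC.not_indep (hI.subset h)
  have hfe : f ≠ e := fun h ↦ hfI (h ▸ mem_insert _ _)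
  have hfR : f ∈ R := ((M.fundCircuit_subset_insert e R) hfC).resolve_left hfe
  refine ⟨{f}, singleton_subset_iff.2 ⟨hfR, fun h ↦ hfI (mem_insert_of_mem _ h)⟩,
    subsingleton_singleton, ?_⟩
  rw [insert_sdiff_singleton_comm hfe.symm]
  exact (hR.mem_fundCircuit_iff hecl heR).1 hfC

end Matroid

section Colour

variable {α β : Type*} {κ : α → β} {R : Set α}

lemma Set.InjOn.subsingleton_sep_eq (hR : InjOn κ R) (b : β) :
    {x ∈ R | κ x = b}.Subsingleton :=
  fun _ hx _ hy ↦ hR hx.1 hy.1 (hx.2.trans hy.2.symm)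

lemma Set.InjOn.insert_sdiff_sep_eq (hR : InjOn κ R) (e : α) :
    InjOn κ (insert e (R \ {x ∈ R | κ x = κ e})) := by
  rw [injOn_insert fun h ↦ h.2 ⟨h.1, rfl⟩]
  refine ⟨hR.mono sdiff_subset, ?_⟩
  rintro ⟨x, hx, hxe⟩
  exact hx.2 ⟨hx.1, hxe⟩

end Colour

theorem remove_two_insert_one_general {α β : Type*} (M : Matroid α) (κ : α → β)
    (I R : Set α)
    (hR : RainbowIndep M κ R)
    (e : α) (he : e ∉ I) (heI : RainbowIndep M κ (insert e I)) :
    ∃ F ⊆ R \ I, F.ncard ≤ 2 ∧ RainbowIndep M κ (insert e (R \ F)) := by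
  set S := {x ∈ R | κ x = κ e}
  have hSI : Disjoint S I := disjoint_left.2 fun x hx hxI ↦
    he (heI.2 (mem_insert_of_mem _ hxI) (mem_insert _ _) hx.2 ▸ hxI)
  obtain ⟨F, hF, hFs, hFi⟩ := (hR.1.sdiff S).exists_subsingleton_insert_sdiff_indep heI.1
  have hS := hR.2.subsingleton_sep_eq (κ e)
  refine ⟨S ∪ F, union_subset (subset_sdiff.2 ⟨sep_subset _ _, hSI⟩)
    (hF.trans (sdiff_subset_sdiff_left sdiff_subset)), ?_, ?_⟩
  · calc (S ∪ F).ncard ≤ S.ncard + F.ncard := ncard_union_le _ _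
      _ ≤ 1 + 1 := add_le_add ((ncard_le_one hS.finite).2 hS) ((ncard_le_one hFs.finite).2 hFs)
  · rw [← sdiff_sdiff]
    exact ⟨hFi, (hR.2.insert_sdiff_sep_eq e).mono (insert_subset_insert sdiff_subset)⟩

/-- If `I ∪ {e}` is a rainbow independent set and `I ⊆ R` with `R` rainbow independent,
then at most two elements `f₁, f₂` of `R \ I` can be removed so that
`(R \ {f₁, f₂}) ∪ {e}` is a rainbow independent set. -/
theorem remove_two_insert_one {α β : Type*} (M : Matroid α) [M.Finite] (κ : α → β)
    (hκ : IsColouring M κ) (I R : Set α)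
    (hI : RainbowIndep M κ I) (hR : RainbowIndep M κ R) (hIR : I ⊆ R)
    (e : α) (he : e ∉ I) (heI : RainbowIndep M κ (insert e I)) :
    ∃ F ⊆ R \ I, F.ncard ≤ 2 ∧ RainbowIndep M κ (insert e (R \ F)) :=
  remove_two_insert_one_general M κ I R hR e he heI
end

section
/- Reduction is monotone: let 𝒯 = {T₁,…,T_m} and 𝒯̂ = {T̂₁,…,T̂_m} be families of disjoint rainbow independent sets in a coloured matroid with T̂ᵢ ⊆ Tᵢ for all i. Then for every r ≥ 0 and ℓ ≥ 1, the r-fold ℓ-reduced family of 𝒯̂ is a subfamily of the r-fold ℓ-reduced family of 𝒯, i.e. (𝒯̂)_ℓ^{(r)} ⊆ 𝒯_ℓ^{(r)} componentwise. -/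
open Set

/-- A family of pairwise-disjoint rainbow independent sets. -/
def RainbowFamily {α β : Type*} (M : Matroid α) (κ : α → β) {m : ℕ}
    (T : Fin m → Set α) : Prop :=
  (∀ i, RainbowIndep M κ (T i)) ∧ Pairwise (Function.onFun Disjoint T)

/-- The `ℓ`-reduction of a family: delete every element `e` for which at least `ℓ`
members `T j` (not already containing `e`) have `T j ∪ {e}` a rainbow independent set. -/
def reduceFam {α β : Type*} (M : Matroid α) (κ : α → β) (ℓ : ℕ) {m : ℕ}
    (T : Fin m → Set α) : Fin m → Set α :=
  fun i => {e ∈ T i |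
    {j : Fin m | e ∉ T j ∧ RainbowIndep M κ (insert e (T j))}.ncard < ℓ}

/-- The `r`-fold iterated `ℓ`-reduction of a family. -/
def reduceIter {α β : Type*} (M : Matroid α) (κ : α → β) (ℓ : ℕ) {m : ℕ}
    (r : ℕ) (T : Fin m → Set α) : Fin m → Set α :=
  (fun S => reduceFam M κ ℓ S)^[r] T

theorem RainbowIndep.subset {α β : Type*} {M : Matroid α} {κ : α → β} {I J : Set α}
    (hJ : RainbowIndep M κ J) (hIJ : I ⊆ J) : RainbowIndep M κ I :=
  ⟨hJ.1.subset hIJ, hJ.2.mono hIJ⟩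

/-- An element extends every member of the smaller family that it extends in the larger one,
so it is deleted from the larger family less readily. -/
theorem reduceFam_monotone {α β : Type*} (M : Matroid α) (κ : α → β) (ℓ m : ℕ) :
    Monotone (reduceFam M κ ℓ (m := m)) := by
  intro That T hsub i e ⟨heThat, hcount⟩
  refine ⟨hsub i heThat, lt_of_le_of_lt (Set.ncard_le_ncard ?_ (Set.toFinite _)) hcount⟩
  rintro j ⟨he_notin, he_extends⟩
  exact ⟨fun he => he_notin (hsub j he), he_extends.subset (insert_subset_insert (hsub j))⟩

theorem reduceIter_mono_general {α β : Type*} (M : Matroid α) (κ : α → β)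
    {m : ℕ} (T That : Fin m → Set α)
    (hsub : ∀ i, That i ⊆ T i) (r ℓ : ℕ) :
    ∀ i, reduceIter M κ ℓ r That i ⊆ reduceIter M κ ℓ r T i :=
  (reduceFam_monotone M κ ℓ m).iterate r hsub

/-- **Monotonicity of reduction.** If `T̂ᵢ ⊆ Tᵢ` componentwise for two families of
pairwise-disjoint rainbow independent sets, then the iterated reduced families satisfy
`(T̂)_ℓ^{(r)} ⊆ T_ℓ^{(r)}` componentwise. -/
theorem reduceIter_mono {α β : Type*} (M : Matroid α) [M.Finite] (κ : α → β)
    (hκ : IsColouring M κ) {m : ℕ} (T That : Fin m → Set α)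
    (hT : RainbowFamily M κ T) (hThat : RainbowFamily M κ That)
    (hsub : ∀ i, That i ⊆ T i) (r ℓ : ℕ) (hℓ : 1 ≤ ℓ) :
    ∀ i, reduceIter M κ ℓ r That i ⊆ reduceIter M κ ℓ r T i :=
  reduceIter_mono_general M κ T That hsub r ℓ
end

section
/- Let M be a coloured matroid and 𝒯 a family of pairwise-disjoint rainbow independent sets. Suppose there exist T ∈ 𝒯'_3 (the 3-reduced family of 𝒯) and an element e ∉ E(𝒯) such that T ∪ {e} is a rainbow independent set. Then 𝒯 is not maximum, i.e. there is a family of pairwise-disjoint rainbow independent sets in M with strictly more elements in total than 𝒯. -/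
open Set

/-! Extend `insert e A'`, where `A'` is the reduced part of `A = T i₀`, to a basis `B` of
`insert e A`. As `A` is independent, `B` misses at most one element of `A`, and at most one
element of `A` has the colour of `e`; so replacing `A` by the rainbow part of `B` pushes out at
most two elements, none of them in `A'`. Each of these therefore fits into at least three other
members, enough to reinsert both greedily into distinct members, and the family has gained `e`. -/

theorem Matroid.IsBasis.encard_sdiff_le {α : Type*} {M : Matroid α} {B I X : Set α}
    (hB : M.IsBasis B X) (hI : M.Indep I) (hIX : I ⊆ X) :
    (I \ B).encard ≤ (B \ I).encard := by
  obtain ⟨J, hJ, hIJ⟩ := hI.subset_isBasis_of_subset hIX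
  calc (I \ B).encard ≤ (J \ B).encard := encard_le_encard (sdiff_subset_sdiff_left hIJ)
    _ = (B \ J).encard := hJ.isBase_restrict.encard_sdiff_comm hB.isBase_restrict
    _ ≤ (B \ I).encard := encard_le_encard (sdiff_subset_sdiff_right hIJ)

theorem iUnion_update_insert {ι α : Type*} [DecidableEq ι] (S : ι → Set α) (j : ι) (x : α) :
    ⋃ i, Function.update S j (insert x (S j)) i = insert x (⋃ i, S i) := by
  refine subset_antisymm (iUnion_subset fun i => ?_) (insert_subset ?_ (iUnion_subset fun i => ?_))
  · rcases eq_or_ne i j with rfl | hij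
    · rw [Function.update_self]
      exact insert_subset_insert (subset_iUnion S i)
    · rw [Function.update_of_ne hij]
      exact (subset_iUnion S i).trans (subset_insert x _)
  · exact mem_iUnion_of_mem j (by simp)
  · rcases eq_or_ne i j with rfl | hij
    · exact (subset_insert x (S i)).trans
        ((Function.update_self i _ S).ge.trans (subset_iUnion _ i))
    · simpa [Function.update_of_ne hij] using subset_iUnion (Function.update S j (insert x (S j))) i

theorem insert_iUnion_subset_iUnion_update_union {ι α : Type*} [DecidableEq ι]
    (S : ι → Set α) (j : ι) {W : Set α} {e : α} (he : e ∈ W) :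
    insert e (⋃ i, S i) ⊆ (⋃ i, Function.update S j W i) ∪ (S j \ W) := by
  rintro x (rfl | hx)
  · exact Or.inl (mem_iUnion_of_mem j (by rwa [Function.update_self]))
  obtain ⟨i, hi⟩ := mem_iUnion.1 hx
  rcases eq_or_ne i j with rfl | hij
  · by_cases hxW : x ∈ W
    · exact Or.inl (mem_iUnion_of_mem i (by rwa [Function.update_self]))
    · exact Or.inr ⟨hi, hxW⟩
  · exact Or.inl (mem_iUnion_of_mem i (by rwa [Function.update_of_ne hij]))

theorem notMem_iUnion_update_of_mem_sdiff {ι α : Type*} [DecidableEq ι] {S : ι → Set α}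
    (hS : Pairwise (Function.onFun Disjoint S)) {j : ι} {W : Set α} {x : α} (hx : x ∈ S j \ W) :
    x ∉ ⋃ i, Function.update S j W i := by
  rw [mem_iUnion, not_exists]
  intro i hi
  rcases eq_or_ne i j with rfl | hij
  · exact hx.2 (by rwa [Function.update_self] at hi)
  · rw [Function.update_of_ne hij] at hi
    exact disjoint_left.1 (hS hij) hi hx.1

section Rainbow

variable {α β : Type*} {M : Matroid α} {κ : α → β} {m : ℕ}

def extendableIndices (M : Matroid α) (κ : α → β) (S : Fin m → Set α) (x : α) : Set (Fin m) :=
  {j | x ∉ S j ∧ RainbowIndep M κ (insert x (S j))}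

theorem mem_reduceFam_iff {ℓ : ℕ} {S : Fin m → Set α} {i : Fin m} {x : α} :
    x ∈ reduceFam M κ ℓ S i ↔ x ∈ S i ∧ (extendableIndices M κ S x).ncard < ℓ :=
  Iff.rfl

theorem extendableIndices_sdiff_subset {S S' : Fin m → Set α} {j : Fin m}
    (hSS' : ∀ i, i ≠ j → S' i = S i) (x : α) :
    extendableIndices M κ S x \ {j} ⊆ extendableIndices M κ S' x := by
  rintro i ⟨hi, hij⟩
  rwa [extendableIndices, mem_ofPred_eq, hSS' i hij]

theorem extendableIndices_subset_update {S : Fin m → Set α} {j : Fin m} {x : α} (hx : x ∈ S j)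
    (W : Set α) : extendableIndices M κ S x ⊆ extendableIndices M κ (Function.update S j W) x :=
  fun _ hi => extendableIndices_sdiff_subset (fun _ hk => Function.update_of_ne hk W S) x
    ⟨hi, fun hij => hi.1 (mem_singleton_iff.1 hij ▸ hx)⟩

theorem RainbowIndep.exists_exchange {A A' : Set α} {e : α} (hA : RainbowIndep M κ A)
    (hA'A : A' ⊆ A) (he : RainbowIndep M κ (insert e A')) :
    ∃ W, RainbowIndep M κ W ∧ insert e A' ⊆ W ∧ W ⊆ insert e A ∧ (A \ W).encard ≤ 2 := by
  have hground : insert e A ⊆ M.E :=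
    insert_subset (he.1.subset_ground (mem_insert e A')) hA.1.subset_ground
  obtain ⟨B, hB, hA'B⟩ := he.1.subset_isBasis_of_subset (insert_subset_insert hA'A) hground
  refine ⟨{x ∈ B | x = e ∨ κ x ≠ κ e}, ⟨hB.indep.subset (sep_subset _ _), ?_⟩, ?_, ?_, ?_⟩
  · rintro x ⟨hxB, hx⟩ y ⟨hyB, hy⟩ hxy
    rcases hx with rfl | hx
    · exact (hy.resolve_right (· hxy.symm)).symm
    rcases hy with rfl | hy
    · exact absurd hxy hx
    exact hA.2 ((hB.subset hxB).resolve_left (ne_of_apply_ne κ hx))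
      ((hB.subset hyB).resolve_left (ne_of_apply_ne κ hy)) hxy
  · refine fun x hx => ⟨hA'B hx, or_iff_not_imp_right.2 fun hxe => ?_⟩
    exact he.2 hx (mem_insert e A') (not_not.1 hxe)
  · exact (sep_subset _ _).trans hB.subset
  · have hAB : (A \ B).encard ≤ 1 := calc
      (A \ B).encard ≤ (B \ A).encard := hB.encard_sdiff_le hA.1 (subset_insert e A)
      _ ≤ ({e} : Set α).encard :=
        encard_le_encard fun x ⟨hxB, hxA⟩ => (hB.subset hxB).resolve_right hxA
      _ = 1 := encard_singleton e
    have hclash : {x ∈ A | κ x = κ e}.encard ≤ 1 :=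
      encard_le_one_iff.2 fun x y hx hy => hA.2 hx.1 hy.1 (hx.2.trans hy.2.symm)
    calc (A \ {x ∈ B | x = e ∨ κ x ≠ κ e}).encard
        ≤ (A \ B ∪ {x ∈ A | κ x = κ e}).encard := by
          refine encard_le_encard fun x ⟨hxA, hxW⟩ => ?_
          by_cases hxB : x ∈ B
          · exact Or.inr ⟨hxA, by_contra fun hxe => hxW ⟨hxB, Or.inr hxe⟩⟩
          · exact Or.inl ⟨hxA, hxB⟩
      _ ≤ (A \ B).encard + {x ∈ A | κ x = κ e}.encard := encard_union_le _ _
      _ ≤ 2 := (add_le_add hAB hclash).trans_eq one_add_one_eq_two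

namespace RainbowFamily

variable {S : Fin m → Set α}

theorem finite_iUnion [M.Finite] (hS : RainbowFamily M κ S) : (⋃ i, S i).Finite :=
  M.set_finite _ (iUnion_subset fun i => (hS.1 i).1.subset_ground)

theorem update {W : Set α} (hS : RainbowFamily M κ S) (j : Fin m) (hW : RainbowIndep M κ W)
    (hdisj : ∀ i, i ≠ j → Disjoint W (S i)) :
    RainbowFamily M κ (Function.update S j W) := by
  refine ⟨fun i => ?_, fun i i' hii' => ?_⟩
  · rcases eq_or_ne i j with rfl | hij
    · rwa [Function.update_self]
    · rw [Function.update_of_ne hij]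
      exact hS.1 i
  · simp only [Function.onFun, Function.update_apply]
    split_ifs with hi hi' hi'
    · exact absurd (hi.trans hi'.symm) hii'
    · exact hdisj i' (hi ▸ hii'.symm)
    · exact (hdisj i (hi' ▸ hii')).symm
    · exact hS.2 hii'

theorem update_insert (hS : RainbowFamily M κ S) {x : α} (hx : x ∉ ⋃ i, S i) {j : Fin m}
    (hj : RainbowIndep M κ (insert x (S j))) :
    RainbowFamily M κ (Function.update S j (insert x (S j))) :=
  hS.update j hj fun i hij =>
    disjoint_insert_left.2 ⟨fun h => hx (mem_iUnion_of_mem i h), hS.2 hij.symm⟩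

/-- Elements outside the family can be added greedily to distinct members, each step using up
at most one of the extendable indices of the remaining elements. -/
theorem exists_union_subset_iUnion (hS : RainbowFamily M κ S) {X : Set α} (hX : X.Finite)
    (hXS : ∀ x ∈ X, x ∉ ⋃ i, S i)
    (hXext : ∀ x ∈ X, X.ncard ≤ (extendableIndices M κ S x).ncard) :
    ∃ S' : Fin m → Set α, RainbowFamily M κ S' ∧ (⋃ i, S i) ∪ X ⊆ ⋃ i, S' i := by
  induction X, hX using Set.Finite.induction_on generalizing S with
  | empty => exact ⟨S, hS, by simp⟩
  | @insert a Y haY hY ih =>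
    have haS := hXS a (mem_insert a Y)
    obtain ⟨j, hj⟩ : (extendableIndices M κ S a).Nonempty := by
      refine nonempty_of_ncard_ne_zero fun h => ?_
      have := hXext a (mem_insert a Y)
      rw [h, ncard_insert_of_notMem haY hY] at this
      omega
    have hS₁U := iUnion_update_insert S j a
    obtain ⟨S', hS', hsub⟩ := ih (hS.update_insert haS hj.2)
      (fun y hy => by
        rw [hS₁U, mem_insert_iff, not_or]
        exact ⟨fun h => haY (h ▸ hy), hXS y (mem_insert_of_mem a hy)⟩)
      (fun y hy => by
        have h₁ := hXext y (mem_insert_of_mem a hy)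
        have h₂ := ncard_le_ncard (extendableIndices_sdiff_subset (M := M) (κ := κ) (j := j)
          (fun i hij => Function.update_of_ne hij (insert a (S j)) S) y)
        have h₃ := ncard_le_ncard_sdiff_add_ncard (extendableIndices M κ S y) {j}
        rw [ncard_insert_of_notMem haY hY] at h₁
        rw [ncard_singleton] at h₃
        omega)
    refine ⟨S', hS', ?_⟩
    rw [hS₁U] at hsub
    rintro x (hx | rfl | hx)
    · exact hsub (Or.inl (mem_insert_of_mem a hx))
    · exact hsub (Or.inl (mem_insert x _))
    · exact hsub (Or.inr hx)

end RainbowFamily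

end Rainbow

theorem not_maximum_of_reduced_extension_general {α β : Type*} (M : Matroid α) [M.Finite]
    (κ : α → β) {m : ℕ} (T : Fin m → Set α)
    (hT : RainbowFamily M κ T)
    (i₀ : Fin m) (e : α) (he : e ∉ ⋃ i, T i)
    (hext : RainbowIndep M κ (insert e (reduceFam M κ 3 T i₀))) :
    ∃ S : Fin m → Set α, RainbowFamily M κ S ∧
      (⋃ i, T i).ncard < (⋃ i, S i).ncard := by
  obtain ⟨W, hW, heA'W, hWA, hcard⟩ := (hT.1 i₀).exists_exchange (sep_subset _ _) hext
  have hXfin : (T i₀ \ W).Finite := M.set_finite _ (sdiff_subset.trans (hT.1 i₀).1.subset_ground)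
  have hX2 : (T i₀ \ W).ncard ≤ 2 := by exact_mod_cast hXfin.cast_ncard_eq ▸ hcard
  have hS₁ : RainbowFamily M κ (Function.update T i₀ W) :=
    hT.update i₀ hW fun i hi => (disjoint_insert_left.2
      ⟨fun h => he (mem_iUnion_of_mem i h), hT.2 hi.symm⟩).mono_left hWA
  have hXext : ∀ x ∈ T i₀ \ W,
      (T i₀ \ W).ncard ≤ (extendableIndices M κ (Function.update T i₀ W) x).ncard := by
    rintro x ⟨hxT, hxW⟩
    have h3 : 3 ≤ (extendableIndices M κ T x).ncard :=
      not_lt.1 fun h => hxW (heA'W (mem_insert_of_mem e (mem_reduceFam_iff.2 ⟨hxT, h⟩)))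
    calc (T i₀ \ W).ncard ≤ (extendableIndices M κ T x).ncard := by omega
      _ ≤ _ := ncard_le_ncard (extendableIndices_subset_update hxT W)
  obtain ⟨S, hS, hsub⟩ := hS₁.exists_union_subset_iUnion hXfin
    (fun x hx => notMem_iUnion_update_of_mem_sdiff hT.2 hx) hXext
  refine ⟨S, hS, ncard_lt_ncard ((ssubset_insert he).trans_subset ?_) hS.finite_iUnion⟩
  exact (insert_iUnion_subset_iUnion_update_union T i₀ (heA'W (mem_insert e _))).trans hsub

/-- If some member `T` of the 3-reduced family can be extended by an element `e` outside
`E(𝒯)` to a rainbow independent set, then `𝒯` is not maximum: there is a family of the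
same number of pairwise-disjoint rainbow independent sets with strictly more elements. -/
theorem not_maximum_of_reduced_extension {α β : Type*} (M : Matroid α) [M.Finite]
    (κ : α → β) (hκ : IsColouring M κ) {m : ℕ} (T : Fin m → Set α)
    (hT : RainbowFamily M κ T)
    (i₀ : Fin m) (e : α) (he : e ∉ ⋃ i, T i)
    (hext : RainbowIndep M κ (insert e (reduceFam M κ 3 T i₀))) :
    ∃ S : Fin m → Set α, RainbowFamily M κ S ∧
      (⋃ i, T i).ncard < (⋃ i, S i).ncard :=
  not_maximum_of_reduced_extension_general M κ T hT i₀ e he hext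
end

section
/- Increment lemma: let 𝒯 be a family of at most n pairwise-disjoint rainbow independent sets in a coloured matroid M having n colours each of size ≥ n, and let c be a colour. Then either (i) some Tᵢ ∈ 𝒯 admits at least d_{A(𝒯)}(c) + ½·k-ex_{A(𝒯)}(c) many colour-c elements e ∉ E(𝒯) with Tᵢ ∪ {e} a rainbow independent set, or (ii) the ℓ-reduced family satisfies e_{𝒯'_ℓ}(c) ≤ e_𝒯(c) − ½·k-ex_{A(𝒯)}(c) + ℓn/k. -/
open Set

open scoped Classical

/-- Degree of a colour `c` in the availability graph `A(𝒯)`: the number of members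
of the family missing colour `c`. -/
noncomputable def colourDeg {α β : Type*} (κ : α → β) {m : ℕ} (T : Fin m → Set α)
    (c : β) : ℕ :=
  {i : Fin m | c ∉ κ '' T i}.ncard

/-- Degree of a member `T i` in the availability graph `A(𝒯)`: the number of colours
missing from `T i`. -/
noncomputable def memberDeg {α β : Type*} [Fintype β] (κ : α → β) {m : ℕ}
    (T : Fin m → Set α) (i : Fin m) : ℕ :=
  {b : β | b ∉ κ '' T i}.ncard

/-- The `k`-excess of a colour `c` in the availability graph `A(𝒯)`:
`max (0, d(x_k) − d(c))` where `x_k` is the `k`-th largest-degree neighbour of `c`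
(`0` if `c` has fewer than `k` neighbours; truncated subtraction). -/
noncomputable def colourKExcess {α β : Type*} [Fintype β] (κ : α → β) {m : ℕ}
    (T : Fin m → Set α) (k : ℕ) (c : β) : ℕ :=
  kthLargest ((Finset.univ.filter (fun i : Fin m => c ∉ κ '' T i)).val.map
    (memberDeg κ T)) k - colourDeg κ T c

/-!
Suppose (i) fails and the `k`-excess `x` of `c` is positive. Then at least `k` members `Tⱼ`
miss `c` and have degree at least `d(c) + x`. Augmenting `Tⱼ` from the colour class of `c`
(independent, of size `≥ n = |Tⱼ| + d(Tⱼ)`) yields at least `d(Tⱼ)` colour-`c` elements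
extending `Tⱼ`; fewer than `d(c) + x/2` of them lie outside `E(𝒯)`, so more than `x/2` lie in
`E(𝒯)`. Double count these pairs over the at most `n` colour-`c` elements of `E(𝒯)`: one kept
by the `ℓ`-reduction extends fewer than `ℓ` members, a deleted one at most `k` of the chosen
ones. Hence more than `x/2 − ℓn/k` colour-`c` elements are deleted.
-/
theorem Matroid.Indep.encard_le_add_encard_indep_insert {α : Type*} {M : Matroid α}
    {I J : Set α} (hI : M.Indep I) (hJ : M.Indep J) :
    J.encard ≤ I.encard + {e ∈ J | M.Indep (insert e I)}.encard := by
  have hIJ : I ∪ J ⊆ M.E := union_subset hI.subset_ground hJ.subset_ground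
  obtain ⟨B, hB, hIB⟩ := hI.subset_isBasis_of_subset subset_union_left hIJ
  obtain ⟨B', hB', hJB'⟩ := hJ.subset_isBasis_of_subset subset_union_right hIJ
  have hnew : B \ I ⊆ {e ∈ J | M.Indep (insert e I)} := fun e he ↦
    ⟨(hB.subset he.1).resolve_left he.2, hB.indep.subset (insert_subset he.1 hIB)⟩
  calc J.encard ≤ B'.encard := encard_le_encard hJB'
    _ = B.encard := hB'.encard_eq_encard hB
    _ = I.encard + (B \ I).encard := by rw [add_comm, encard_sdiff_add_encard_of_subset hIB]
    _ ≤ I.encard + {e ∈ J | M.Indep (insert e I)}.encard := by gcongr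

theorem kthLargest_eq_zero_of_card_lt {s : Multiset ℕ} {k : ℕ}
    (h : Multiset.card s < k) : kthLargest s k = 0 :=
  List.getD_eq_default _ _ (by simp; omega)

theorem le_card_filter_kthLargest_le {s : Multiset ℕ} {k : ℕ}
    (h : k ≤ Multiset.card s) : k ≤ Multiset.card (s.filter (kthLargest s k ≤ ·)) := by
  rcases Nat.eq_zero_or_pos k with rfl | hk
  · exact Nat.zero_le _
  set l := (s.sort (· ≤ ·)).reverse
  have hl : l.length = Multiset.card s := by simp [l]
  have hsorted : l.Pairwise (· ≥ ·) := by simp [l, List.pairwise_reverse]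
  have hL : kthLargest s k = l[k - 1]'(by omega) := List.getD_eq_getElem _ _ _
  have htake : ∀ x ∈ l.take k, kthLargest s k ≤ x := by
    intro x hx
    obtain ⟨i, hi, rfl⟩ := List.getElem_of_mem hx
    rw [List.getElem_take, hL]
    rcases (show i ≤ k - 1 by simp at hi; omega).lt_or_eq with hlt | rfl
    · exact List.pairwise_iff_getElem.1 hsorted _ _ _ _ hlt
    · rfl
  calc k = (l.take k).countP (kthLargest s k ≤ ·) := by
        rw [List.countP_eq_length.2 (by simpa using htake)]; simp; omega
    _ ≤ l.countP (kthLargest s k ≤ ·) := (List.take_sublist k l).countP_le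
    _ = Multiset.card (s.filter (kthLargest s k ≤ ·)) := by
        rw [← Multiset.countP_eq_card_filter, List.countP_reverse, ← Multiset.coe_countP,
          Multiset.sort_eq]

section Rainbow

variable {α β : Type*} {M : Matroid α} {κ : α → β} {m : ℕ} {T : Fin m → Set α}

theorem rainbowIndep_insert_iff {I : Set α} {e : α} (hI : InjOn κ I) (he : κ e ∉ κ '' I) :
    RainbowIndep M κ (insert e I) ↔ M.Indep (insert e I) := by
  have heI : e ∉ I := fun h ↦ he (mem_image_of_mem κ h)
  simp [RainbowIndep, injOn_insert heI, hI, he]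

theorem ncard_add_memberDeg [Fintype β] {i : Fin m} (hi : InjOn κ (T i)) :
    (T i).ncard + memberDeg κ T i = Fintype.card β := by
  rw [← hi.ncard_image, memberDeg, ← Nat.card_eq_fintype_card]
  exact ncard_add_ncard_compl _

theorem ncard_colourClass_iUnion_le (hT : ∀ i, InjOn κ (T i)) (c : β) :
    {x ∈ ⋃ i, T i | κ x = c}.ncard ≤ m := by
  have hle : ∀ i, {x ∈ T i | κ x = c}.ncard ≤ 1 := fun i ↦ by
    have hsub : {x ∈ T i | κ x = c}.Subsingleton := fun a ha b hb ↦
      hT i ha.1 hb.1 (ha.2.trans hb.2.symm)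
    have := hsub.finite.to_subtype
    exact ncard_le_one_iff_subsingleton.2 hsub
  calc {x ∈ ⋃ i, T i | κ x = c}.ncard = (⋃ i, {x ∈ T i | κ x = c}).ncard := by
        congr 1; ext; simp
    _ ≤ ∑ i, {x ∈ T i | κ x = c}.ncard := ncard_iUnion_le_of_fintype _
    _ ≤ ∑ _i : Fin m, 1 := Finset.sum_le_sum fun i _ ↦ hle i
    _ = m := by simp

theorem colourClass_iUnion_reduceFam (ℓ : ℕ) (c : β) :
    {x ∈ ⋃ i, reduceFam M κ ℓ T i | κ x = c} = {e ∈ {x ∈ ⋃ i, T i | κ x = c} |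
      {j | e ∉ T j ∧ RainbowIndep M κ (insert e (T j))}.ncard < ℓ} := by
  ext e; simp [reduceFam]; tauto

theorem ncard_rainbowIndep_insert_le_add [M.Finite] (hTE : ∀ i, T i ⊆ M.E) {j : Fin m} {c : β}
    (hc : c ∉ κ '' T j) :
    {e ∈ M.E | κ e = c ∧ RainbowIndep M κ (insert e (T j))}.ncard ≤
      {e | e ∈ M.E ∧ κ e = c ∧ e ∉ ⋃ i, T i ∧ RainbowIndep M κ (insert e (T j))}.ncard +
      {e ∈ {x ∈ ⋃ i, T i | κ x = c} | e ∉ T j ∧ RainbowIndep M κ (insert e (T j))}.ncard := by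
  refine (ncard_le_ncard ?_ ((M.ground_finite.subset fun e he ↦ he.1).union
    (M.ground_finite.subset fun e he ↦ iUnion_subset hTE he.1.1))).trans (ncard_union_le _ _)
  rintro e ⟨heE, hec, hext⟩
  by_cases he : e ∈ ⋃ i, T i
  · exact .inr ⟨⟨he, hec⟩, fun h ↦ hc ⟨e, h, hec⟩, hext⟩
  · exact .inl ⟨heE, hec, he, hext⟩

end Rainbow

open Finset in
theorem Finset.sum_ncard_filter_add_card_mul_ncard_le {ι α : Type*} [Fintype ι] (S : Finset ι)
    {F : Set α} (hF : F.Finite) (R : α → ι → Prop) (ℓ : ℕ) :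
    ∑ j ∈ S, {e ∈ F | R e j}.ncard + #S * {e ∈ F | {j | R e j}.ncard < ℓ}.ncard ≤
      (#S + ℓ) * F.ncard := by
  lift F to Finset α using hF
  have hcount : ∀ e, #{j ∈ S | R e j} ≤ {j | R e j}.ncard := fun e ↦ by
    rw [← ncard_coe_finset]
    exact ncard_le_ncard (by simp)
  have hpoint : ∀ e ∈ F, #{j ∈ S | R e j} + (if {j | R e j}.ncard < ℓ then #S else 0) ≤
      #S + ℓ := fun e _ ↦ by
    split_ifs with h
    · linarith [hcount e]
    · linarith [card_filter_le S (R e)]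
  have hfilter : ∀ p : α → Prop, {e ∈ (F : Set α) | p e}.ncard = #{e ∈ F | p e} := fun p ↦ by
    rw [← ncard_coe_finset, coe_filter]; rfl
  calc ∑ j ∈ S, {e ∈ (F : Set α) | R e j}.ncard +
        #S * {e ∈ (F : Set α) | {j | R e j}.ncard < ℓ}.ncard
      = ∑ e ∈ F, (#{j ∈ S | R e j} + if {j | R e j}.ncard < ℓ then #S else 0) := by
        simp only [hfilter, card_filter, sum_add_distrib, mul_sum, mul_ite, mul_one, mul_zero]
        rw [sum_comm]
    _ ≤ ∑ _e ∈ F, (#S + ℓ) := sum_le_sum hpoint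
    _ = (#S + ℓ) * (F : Set α).ncard := by simp [mul_comm]

open Finset in
theorem Finset.ncard_filter_ncard_lt_le_sub_add {ι α : Type*} [Fintype ι] {S : Finset ι}
    (hS : S.Nonempty) {F : Set α} (hF : F.Finite) (R : α → ι → Prop) (ℓ : ℕ) {x : ℝ}
    (hx : ∀ j ∈ S, x ≤ {e ∈ F | R e j}.ncard) :
    ({e ∈ F | {j | R e j}.ncard < ℓ}.ncard : ℝ) ≤ F.ncard - x + ℓ * F.ncard / #S := by
  have hcount : ∑ j ∈ S, ({e ∈ F | R e j}.ncard : ℝ) +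
      #S * {e ∈ F | {j | R e j}.ncard < ℓ}.ncard ≤ (#S + ℓ) * F.ncard := by
    exact_mod_cast sum_ncard_filter_add_card_mul_ncard_le S hF R ℓ
  have hsum : #S * x ≤ ∑ j ∈ S, ({e ∈ F | R e j}.ncard : ℝ) := by
    simpa using card_nsmul_le_sum S _ x hx
  have hS' : (0 : ℝ) < #S := by exact_mod_cast hS.card_pos
  rw [← sub_le_iff_le_add', le_div_iff₀ hS']
  linarith

section Increment

variable {α β : Type*} [Fintype β] {M : Matroid α} {κ : α → β} {m : ℕ} {T : Fin m → Set α}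

theorem memberDeg_le_ncard_rainbowIndep_insert [M.Finite] {i : Fin m}
    (hTi : RainbowIndep M κ (T i)) {c : β} (hc : c ∉ κ '' T i)
    (hcls : M.Indep {x ∈ M.E | κ x = c})
    (hsize : Fintype.card β ≤ {x ∈ M.E | κ x = c}.ncard) :
    memberDeg κ T i ≤ {e ∈ M.E | κ e = c ∧ RainbowIndep M κ (insert e (T i))}.ncard := by
  have hext : {e ∈ {x ∈ M.E | κ x = c} | M.Indep (insert e (T i))} =
      {e ∈ M.E | κ e = c ∧ RainbowIndep M κ (insert e (T i))} := by
    ext e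
    simp only [mem_ofPred_eq, and_assoc]
    refine and_congr_right fun _ ↦ and_congr_right fun hec ↦ ?_
    exact (rainbowIndep_insert_iff hTi.2 (hec ▸ hc)).symm
  have hfin : ∀ {X : Set α}, X ⊆ M.E → (X.ncard : ℕ∞) = X.encard := fun hX ↦
    (M.ground_finite.subset hX).cast_ncard_eq
  have haug := hTi.1.encard_le_add_encard_indep_insert hcls
  rw [hext, ← hfin hcls.subset_ground, ← hfin hTi.1.subset_ground,
    ← hfin fun e he ↦ he.1] at haug
  have := ncard_add_memberDeg hTi.2
  norm_cast at haug
  omega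

theorem memberDeg_le_ncard_add_ncard [M.Finite] (hT : ∀ i, RainbowIndep M κ (T i)) {c : β}
    (hcls : M.Indep {x ∈ M.E | κ x = c})
    (hsize : Fintype.card β ≤ {x ∈ M.E | κ x = c}.ncard) {j : Fin m} (hc : c ∉ κ '' T j) :
    memberDeg κ T j ≤
      {e | e ∈ M.E ∧ κ e = c ∧ e ∉ ⋃ i, T i ∧ RainbowIndep M κ (insert e (T j))}.ncard +
      {e ∈ {x ∈ ⋃ i, T i | κ x = c} | e ∉ T j ∧ RainbowIndep M κ (insert e (T j))}.ncard :=
  (memberDeg_le_ncard_rainbowIndep_insert (hT j) hc hcls hsize).trans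
    (ncard_rainbowIndep_insert_le_add (fun i ↦ (hT i).1.subset_ground) hc)

theorem exists_card_eq_colourDeg_add_colourKExcess_le_memberDeg {k : ℕ} {c : β}
    (h : colourKExcess κ T k c ≠ 0) :
    ∃ S : Finset (Fin m), S.card = k ∧
      ∀ j ∈ S, c ∉ κ '' T j ∧ colourDeg κ T c + colourKExcess κ T k c ≤ memberDeg κ T j := by
  set N := Finset.univ.filter fun i : Fin m ↦ c ∉ κ '' T i
  set L := kthLargest (N.val.map (memberDeg κ T)) k
  have hL : colourKExcess κ T k c = L - colourDeg κ T c := rfl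
  have hk : k ≤ Multiset.card (N.val.map (memberDeg κ T)) := by
    by_contra! hlt
    have : L = 0 := kthLargest_eq_zero_of_card_lt hlt
    omega
  have hN := le_card_filter_kthLargest_le hk
  rw [Multiset.filter_map, Multiset.card_map] at hN
  obtain ⟨S, hSN, hS⟩ := Finset.exists_subset_card_eq (s := N.filter (L ≤ memberDeg κ T ·)) hN
  refine ⟨S, hS, fun j hj ↦ ?_⟩
  obtain ⟨hjN, hjL⟩ := Finset.mem_filter.1 (hSN hj)
  exact ⟨(Finset.mem_filter.1 hjN).2, by omega⟩

end Increment

/-- **Increment lemma.** For a family `𝒯` of at most `n` pairwise-disjoint rainbow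
independent sets in a coloured matroid with `n` colours each of size `≥ n`, and any
colour `c`, either some `Tᵢ` admits at least `d_{A(𝒯)}(c) + ½·k-ex_{A(𝒯)}(c)` many
colour-`c` elements outside `E(𝒯)` extending it to a rainbow independent set, or the
`ℓ`-reduced family satisfies `e_{𝒯'_ℓ}(c) ≤ e_𝒯(c) − ½·k-ex_{A(𝒯)}(c) + ℓn/k`. -/
theorem increment_lemma {α β : Type*} [Fintype β] (M : Matroid α) [M.Finite]
    (κ : α → β) (hκ : IsColouring M κ) (n : ℕ) (hn : Fintype.card β = n)
    (hsize : ∀ b : β, n ≤ {x ∈ M.E | κ x = b}.ncard)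
    {m : ℕ} (hm : m ≤ n) (T : Fin m → Set α) (hT : RainbowFamily M κ T)
    (k ℓ : ℕ) (hk : 0 < k) (c : β) :
    (∃ i : Fin m,
        (colourDeg κ T c : ℝ) + (colourKExcess κ T k c : ℝ) / 2 ≤
          ({e | e ∈ M.E ∧ κ e = c ∧ e ∉ (⋃ j, T j) ∧
            RainbowIndep M κ (insert e (T i))}.ncard : ℝ)) ∨
      (({x ∈ ⋃ i, reduceFam M κ ℓ T i | κ x = c}.ncard : ℝ) ≤
        ({x ∈ ⋃ i, T i | κ x = c}.ncard : ℝ) - (colourKExcess κ T k c : ℝ) / 2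
          + (ℓ : ℝ) * (n : ℝ) / (k : ℝ)) := by
  refine or_iff_not_imp_left.2 fun hext ↦ ?_
  simp only [not_exists, not_le] at hext
  obtain ⟨hTind, -⟩ := hT
  set F := {x ∈ ⋃ i, T i | κ x = c}
  have hF : F.Finite :=
    M.ground_finite.subset fun x hx ↦ iUnion_subset (fun i ↦ (hTind i).1.subset_ground) hx.1
  have hFn : F.ncard ≤ n := (ncard_colourClass_iUnion_le (fun i ↦ (hTind i).2) c).trans hm
  rw [colourClass_iUnion_reduceFam]
  rcases eq_or_ne (colourKExcess κ T k c) 0 with hex | hex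
  · rw [hex, Nat.cast_zero, zero_div, sub_zero]
    exact le_add_of_le_of_nonneg (by exact_mod_cast ncard_le_ncard (sep_subset _ _) hF)
      (by positivity)
  obtain ⟨S, hS, hSdeg⟩ := exists_card_eq_colourDeg_add_colourKExcess_le_memberDeg hex
  have hins : ∀ j ∈ S, (colourKExcess κ T k c : ℝ) / 2 ≤
      {e ∈ F | e ∉ T j ∧ RainbowIndep M κ (insert e (T j))}.ncard := fun j hj ↦ by
    obtain ⟨hcj, hdeg⟩ := hSdeg j hj
    have := (Nat.cast_le (α := ℝ)).2
      (hdeg.trans (memberDeg_le_ncard_add_ncard hTind (hκ c) (hn ▸ hsize c) hcj))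
    push_cast at this
    linarith [hext j]
  calc _ ≤ F.ncard - (colourKExcess κ T k c : ℝ) / 2 + ℓ * F.ncard / S.card :=
        Finset.ncard_filter_ncard_lt_le_sub_add (Finset.card_pos.1 (hS ▸ hk)) hF _ ℓ hins
    _ ≤ _ := by rw [hS]; gcongr
end
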